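/- arXiv:2508.19640 — 3 statements merged into one kernel-verified Lean document; each statement's English description precedes it below -/
import Mathlib

section
/- Sensitivity of the truncated Breslow tree levels (privacy step in the proof of Theorem 4.1): Fix n ≥ 2, d ≥ 1, a truncation level c > 0, a vector β̂ ∈ ℝ^d, a level l ∈ ℕ, and C_Z > 0. For a survival dataset D of size n and m ∈ {1,…,2^l} define x_m(D) := n⁻¹ Σ_{i : Δ_i = 1, (m−1)·2^{−l} ≤ T_i < m·2^{−l}} 1 / max(c, S⁰(T_i, β̂; D)). Then for every pair of neighbouring survival datasets D, D' of size n that both satisfy the covariate bound C_Z, Σ_{m=1}^{2^l} (x_m(D) − x_m(D'))² ≤ 2 e^{2 C_Z ‖β̂‖₂} / (c⁴ n²) + 4 / (c² n²). -/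
open scoped BigOperators
open MeasureTheory Real
open scoped RealInnerProductSpace
noncomputable section

structure SurvData (n d : ℕ) where
  T : Fin n → ℝ
  Δ : Fin n → Bool
  Z : Fin n → ℝ → EuclideanSpace ℝ (Fin d)

namespace SurvData

variable {n d : ℕ}

/-- Observed times lie in `[0,1]`. -/
def valid (D : SurvData n d) : Prop := ∀ i, D.T i ∈ Set.Icc (0 : ℝ) 1

/-- Covariate bound: `‖Z_i(t)‖₂ ≤ C_Z` for all `i` and all `t ∈ [0,1]`. -/
def covBound (D : SurvData n d) (CZ : ℝ) : Prop :=
  ∀ i, ∀ t ∈ Set.Icc (0 : ℝ) 1, ‖D.Z i t‖ ≤ CZ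

def S0 (D : SurvData n d) (β : EuclideanSpace ℝ (Fin d)) (t : ℝ) : ℝ :=
  (n : ℝ)⁻¹ * ∑ j, if t ≤ D.T j then Real.exp ⟪β, D.Z j t⟫ else 0

def S1 (D : SurvData n d) (β : EuclideanSpace ℝ (Fin d)) (t : ℝ) :
    EuclideanSpace ℝ (Fin d) :=
  (n : ℝ)⁻¹ • ∑ j, if t ≤ D.T j then Real.exp ⟪β, D.Z j t⟫ • D.Z j t else 0

def Zbar (D : SurvData n d) (β : EuclideanSpace ℝ (Fin d)) (t : ℝ) :
    EuclideanSpace ℝ (Fin d) :=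
  (D.S0 β t)⁻¹ • D.S1 β t

/-- The Cox partial-likelihood score `ℓ̇(β; D)`. -/
def score (D : SurvData n d) (β : EuclideanSpace ℝ (Fin d)) :
    EuclideanSpace ℝ (Fin d) :=
  (n : ℝ)⁻¹ • ∑ i, if D.Δ i then D.Z i (D.T i) - D.Zbar β (D.T i) else 0

/-- Neighbouring datasets: they differ in at most one triple. -/
def Neighbor (D D' : SurvData n d) : Prop :=
  ∃ i0 : Fin n, ∀ i, i ≠ i0 → D.T i = D'.T i ∧ D.Δ i = D'.Δ i ∧ D.Z i = D'.Z i


/-- Level-`l` entries of the binary-tree representation of the truncated Breslow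
estimator: `x_m(D) = n⁻¹ Σ_{i : Δ_i = 1, (m−1)2^{−l} ≤ T_i < m 2^{−l}}
1/max(c, S⁰(T_i, β̂; D))`. -/
def treeLevel (D : SurvData n d) (βhat : EuclideanSpace ℝ (Fin d)) (c : ℝ)
    (l m : ℕ) : ℝ :=
  (n : ℝ)⁻¹ * ∑ i, if D.Δ i ∧ ((m : ℝ) - 1) / 2 ^ l ≤ D.T i ∧ D.T i < (m : ℝ) / 2 ^ l
    then (max c (D.S0 βhat (D.T i)))⁻¹ else 0

end SurvData


/-!
Only the record `i₀` in which `D` and `D'` differ can change bins. Every other record lies in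
the same bin for both datasets and contributes `n⁻¹ (w(Tᵢ) - w'(Tᵢ))`, where
`w = 1 / max(c, S⁰)`; since one record changes `S⁰` by at most `e^{C_Z ‖β̂‖} / n` and
`x ↦ 1 / max(c, x)` is `c⁻²`-Lipschitz, each such contribution is at most
`e^{C_Z ‖β̂‖} / (c² n²)`. Each record lies in a single bin, so the `ℓ²` norm of the binned
contributions is at most their total `ℓ¹` mass `e^{C_Z ‖β̂‖} / (c² n)`. The record `i₀` adds the
difference of two single-bin vectors with entries in `[0, 1 / (c n)]`, of squared norm at most
`2 / (c² n²)`, and `(a + b)² ≤ 2a² + 2b²` combines the two parts.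
-/

open Finset

lemma Nat.eq_of_sub_one_div_le_of_lt_div {q x : ℝ} (hq : 0 < q) {a b : ℕ}
    (ha₁ : ((a : ℝ) - 1) / q ≤ x) (ha₂ : x < a / q)
    (hb₁ : ((b : ℝ) - 1) / q ≤ x) (hb₂ : x < b / q) : a = b := by
  have hab : (a : ℝ) < b + 1 := by
    have := (div_lt_div_iff_of_pos_right hq).mp (ha₁.trans_lt hb₂)
    linarith
  have hba : (b : ℝ) < a + 1 := by
    have := (div_lt_div_iff_of_pos_right hq).mp (hb₁.trans_lt ha₂)
    linarith
  have : a < b + 1 := by exact_mod_cast hab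
  have : b < a + 1 := by exact_mod_cast hba
  omega

namespace Finset

variable {ι κ : Type*} {s : Finset κ}

lemma sum_ite_const_le {P : κ → Prop} [DecidablePred P]
    (hP : ∀ a ∈ s, ∀ b ∈ s, P a → P b → a = b) {v : ℝ} (hv : 0 ≤ v) :
    ∑ m ∈ s, (if P m then v else 0) ≤ v := by
  have hcard : #(s.filter P) ≤ 1 :=
    card_le_one.mpr fun a ha b hb => hP a (mem_filter.mp ha).1 b (mem_filter.mp hb).1
      (mem_filter.mp ha).2 (mem_filter.mp hb).2
  rw [sum_ite, sum_const_zero, add_zero, sum_const, nsmul_eq_mul]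
  exact mul_le_of_le_one_left hv (by exact_mod_cast hcard)

lemma sum_sq_sum_ite_le {t : Finset ι} {P : ι → κ → Prop} [∀ i, DecidablePred (P i)]
    (hP : ∀ i ∈ t, ∀ a ∈ s, ∀ b ∈ s, P i a → P i b → a = b) (w : ι → ℝ) :
    ∑ m ∈ s, (∑ i ∈ t, if P i m then w i else 0) ^ 2 ≤ (∑ i ∈ t, |w i|) ^ 2 := by
  have hl1 : ∑ m ∈ s, |∑ i ∈ t, if P i m then w i else 0| ≤ ∑ i ∈ t, |w i| :=
    calc ∑ m ∈ s, |∑ i ∈ t, if P i m then w i else 0|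
        ≤ ∑ m ∈ s, ∑ i ∈ t, if P i m then |w i| else 0 := by
          refine sum_le_sum fun m _ => (abs_sum_le_sum_abs _ _).trans_eq ?_
          exact sum_congr rfl fun i _ => by split_ifs <;> simp
      _ = ∑ i ∈ t, ∑ m ∈ s, if P i m then |w i| else 0 := sum_comm
      _ ≤ ∑ i ∈ t, |w i| := sum_le_sum fun i hi => sum_ite_const_le (hP i hi) (abs_nonneg _)
  calc ∑ m ∈ s, (∑ i ∈ t, if P i m then w i else 0) ^ 2
      = ∑ m ∈ s, |∑ i ∈ t, if P i m then w i else 0| ^ 2 := by simp only [sq_abs]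
    _ ≤ (∑ m ∈ s, |∑ i ∈ t, if P i m then w i else 0|) ^ 2 :=
        sum_sq_le_sq_sum_of_nonneg fun _ _ => abs_nonneg _
    _ ≤ (∑ i ∈ t, |w i|) ^ 2 := pow_le_pow_left₀ (sum_nonneg fun _ _ => abs_nonneg _) hl1 2

lemma sum_sq_ite_sub_ite_le {P Q : κ → Prop} [DecidablePred P] [DecidablePred Q]
    (hP : ∀ a ∈ s, ∀ b ∈ s, P a → P b → a = b) (hQ : ∀ a ∈ s, ∀ b ∈ s, Q a → Q b → a = b)
    {v v' : ℝ} (hv : 0 ≤ v) (hv' : 0 ≤ v') :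
    ∑ m ∈ s, ((if P m then v else 0) - (if Q m then v' else 0)) ^ 2 ≤ v ^ 2 + v' ^ 2 :=
  calc ∑ m ∈ s, ((if P m then v else 0) - (if Q m then v' else 0)) ^ 2
      ≤ ∑ m ∈ s, ((if P m then v ^ 2 else 0) + (if Q m then v' ^ 2 else 0)) :=
        sum_le_sum fun m _ => by split_ifs <;> nlinarith [mul_nonneg hv hv']
    _ ≤ v ^ 2 + v' ^ 2 := by
        rw [sum_add_distrib]
        exact add_le_add (sum_ite_const_le hP (sq_nonneg v)) (sum_ite_const_le hQ (sq_nonneg v'))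

end Finset

lemma Real.exp_inner_le_exp_mul_norm {E : Type*} [NormedAddCommGroup E] [InnerProductSpace ℝ E]
    {C : ℝ} (β : E) {z : E} (hz : ‖z‖ ≤ C) : Real.exp ⟪β, z⟫ ≤ Real.exp (C * ‖β‖) :=
  Real.exp_le_exp.mpr <| (real_inner_le_norm β z).trans <| by
    rw [mul_comm]; exact mul_le_mul_of_nonneg_right hz (norm_nonneg β)

lemma abs_inv_max_sub_inv_max_le {c : ℝ} (hc : 0 < c) (x y : ℝ) :
    |(max c x)⁻¹ - (max c y)⁻¹| ≤ |x - y| / c ^ 2 := by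
  have hx : 0 < max c x := hc.trans_le (le_max_left c x)
  have hy : 0 < max c y := hc.trans_le (le_max_left c y)
  rw [inv_sub_inv hx.ne' hy.ne', abs_div, abs_of_pos (mul_pos hx hy), abs_sub_comm]
  have hnum : |max c x - max c y| ≤ |x - y| := by
    simpa only [max_comm c] using abs_max_sub_max_le_abs x y c
  have hden : c ^ 2 ≤ max c x * max c y := by
    rw [sq]; exact mul_le_mul (le_max_left c x) (le_max_left c y) hc.le hx.le
  exact div_le_div₀ (abs_nonneg _) hnum (by positivity) hden

namespace SurvData

variable {n d : ℕ} {D D' : SurvData n d} {β : EuclideanSpace ℝ (Fin d)} {c CZ : ℝ}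

def AgreeExcept (D D' : SurvData n d) (i₀ : Fin n) : Prop :=
  ∀ i, i ≠ i₀ → D.T i = D'.T i ∧ D.Δ i = D'.Δ i ∧ D.Z i = D'.Z i

abbrev inBin (D : SurvData n d) (l m : ℕ) (i : Fin n) : Prop :=
  D.Δ i ∧ ((m : ℝ) - 1) / 2 ^ l ≤ D.T i ∧ D.T i < (m : ℝ) / 2 ^ l

lemma inBin_unique (D : SurvData n d) (l : ℕ) (i : Fin n) {a b : ℕ}
    (ha : D.inBin l a i) (hb : D.inBin l b i) : a = b :=
  Nat.eq_of_sub_one_div_le_of_lt_div (by positivity) ha.2.1 ha.2.2 hb.2.1 hb.2.2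

def truncInvS0 (D : SurvData n d) (β : EuclideanSpace ℝ (Fin d)) (c t : ℝ) : ℝ :=
  (max c (D.S0 β t))⁻¹

lemma truncInvS0_nonneg (hc : 0 < c) (t : ℝ) : 0 ≤ D.truncInvS0 β c t :=
  inv_nonneg.mpr (hc.le.trans (le_max_left _ _))

lemma truncInvS0_le (hc : 0 < c) (t : ℝ) : D.truncInvS0 β c t ≤ c⁻¹ :=
  inv_anti₀ hc (le_max_left _ _)

lemma abs_S0_sub_S0_le {i₀ : Fin n} (hi₀ : D.AgreeExcept D' i₀)
    (hZ : D.covBound CZ) (hZ' : D'.covBound CZ) {t : ℝ} (ht : t ∈ Set.Icc (0 : ℝ) 1) :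
    |D.S0 β t - D'.S0 β t| ≤ Real.exp (CZ * ‖β‖) / n := by
  have atRisk_mem : ∀ E : SurvData n d, E.covBound CZ →
      0 ≤ (if t ≤ E.T i₀ then Real.exp ⟪β, E.Z i₀ t⟫ else 0) ∧
        (if t ≤ E.T i₀ then Real.exp ⟪β, E.Z i₀ t⟫ else 0) ≤ Real.exp (CZ * ‖β‖) := by
    intro E hE
    split_ifs
    · exact ⟨(Real.exp_pos _).le, Real.exp_inner_le_exp_mul_norm β (hE i₀ t ht)⟩
    · exact ⟨le_rfl, (Real.exp_pos _).le⟩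
  have hdiff : D.S0 β t - D'.S0 β t = (n : ℝ)⁻¹ *
      ((if t ≤ D.T i₀ then Real.exp ⟪β, D.Z i₀ t⟫ else 0) -
        (if t ≤ D'.T i₀ then Real.exp ⟪β, D'.Z i₀ t⟫ else 0)) := by
    rw [S0, S0, ← mul_sub, ← sum_sub_distrib, sum_eq_single i₀ _ (absurd (mem_univ i₀))]
    intro j _ hj
    obtain ⟨hT, -, hZj⟩ := hi₀ j hj
    rw [hT, hZj, sub_self]
  obtain ⟨h₀, h₁⟩ := atRisk_mem D hZ
  obtain ⟨h₀', h₁'⟩ := atRisk_mem D' hZ'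
  rw [hdiff, abs_mul, abs_inv, Nat.abs_cast, inv_mul_eq_div]
  exact div_le_div_of_nonneg_right (abs_sub_le_of_nonneg_of_le h₀ h₁ h₀' h₁') (Nat.cast_nonneg n)

lemma abs_truncInvS0_sub_le {i₀ : Fin n} (hi₀ : D.AgreeExcept D' i₀)
    (hc : 0 < c) (hZ : D.covBound CZ) (hZ' : D'.covBound CZ) {t : ℝ}
    (ht : t ∈ Set.Icc (0 : ℝ) 1) :
    |D.truncInvS0 β c t - D'.truncInvS0 β c t| ≤ Real.exp (CZ * ‖β‖) / (c ^ 2 * n) :=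
  calc |D.truncInvS0 β c t - D'.truncInvS0 β c t| ≤ |D.S0 β t - D'.S0 β t| / c ^ 2 :=
        abs_inv_max_sub_inv_max_le hc _ _
    _ ≤ Real.exp (CZ * ‖β‖) / n / c ^ 2 := by gcongr; exact abs_S0_sub_S0_le hi₀ hZ hZ' ht
    _ = Real.exp (CZ * ‖β‖) / (c ^ 2 * n) := by rw [div_div, mul_comm (n : ℝ)]

lemma treeLevel_sub_treeLevel {i₀ : Fin n} (hi₀ : D.AgreeExcept D' i₀) (l m : ℕ) :
    D.treeLevel β c l m - D'.treeLevel β c l m =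
      (n : ℝ)⁻¹ * ∑ i ∈ univ.erase i₀, (if D.inBin l m i
          then D.truncInvS0 β c (D.T i) - D'.truncInvS0 β c (D.T i) else 0) +
        (n : ℝ)⁻¹ * ((if D.inBin l m i₀ then D.truncInvS0 β c (D.T i₀) else 0) -
          (if D'.inBin l m i₀ then D'.truncInvS0 β c (D'.T i₀) else 0)) := by
  rw [treeLevel, treeLevel, ← mul_sub, ← sum_sub_distrib, ← add_sum_erase _ _ (mem_univ i₀),
    mul_add, add_comm]
  congr 2
  refine sum_congr rfl fun i hi => ?_
  obtain ⟨hT, hΔ, -⟩ := hi₀ i (ne_of_mem_erase hi)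
  simp only [inBin, truncInvS0, hT, hΔ]
  split_ifs <;> ring

lemma sum_sq_sum_inBin_truncInvS0_sub_le {i₀ : Fin n} (hi₀ : D.AgreeExcept D' i₀) (hc : 0 < c)
    (hT : D.valid) (hZ : D.covBound CZ) (hZ' : D'.covBound CZ) (l : ℕ) (s : Finset ℕ) :
    ∑ m ∈ s, (∑ i ∈ univ.erase i₀, if D.inBin l m i
        then D.truncInvS0 β c (D.T i) - D'.truncInvS0 β c (D.T i) else 0) ^ 2 ≤
      (Real.exp (CZ * ‖β‖) / c ^ 2) ^ 2 := by
  refine (sum_sq_sum_ite_le (fun i _ a _ b _ => D.inBin_unique l i) _).trans ?_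
  refine pow_le_pow_left₀ (sum_nonneg fun _ _ => abs_nonneg _) ?_ 2
  have hn : (n : ℝ) ≠ 0 := Nat.cast_ne_zero.mpr (Fin.pos i₀).ne'
  calc ∑ i ∈ univ.erase i₀, |D.truncInvS0 β c (D.T i) - D'.truncInvS0 β c (D.T i)|
      ≤ ∑ i, |D.truncInvS0 β c (D.T i) - D'.truncInvS0 β c (D.T i)| :=
        sum_le_sum_of_subset_of_nonneg (erase_subset _ _) fun _ _ _ => abs_nonneg _
    _ ≤ ∑ _i : Fin n, Real.exp (CZ * ‖β‖) / (c ^ 2 * n) :=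
        sum_le_sum fun i _ => abs_truncInvS0_sub_le hi₀ hc hZ hZ' (hT i)
    _ = Real.exp (CZ * ‖β‖) / c ^ 2 := by
        rw [sum_const, card_univ, Fintype.card_fin, nsmul_eq_mul]; field_simp

lemma sum_sq_inBin_truncInvS0_sub_le (hc : 0 < c) (i₀ : Fin n) (l : ℕ) (s : Finset ℕ) :
    ∑ m ∈ s, ((if D.inBin l m i₀ then D.truncInvS0 β c (D.T i₀) else 0) -
      (if D'.inBin l m i₀ then D'.truncInvS0 β c (D'.T i₀) else 0)) ^ 2 ≤ c⁻¹ ^ 2 + c⁻¹ ^ 2 := by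
  have hsq : ∀ (E : SurvData n d) t, E.truncInvS0 β c t ^ 2 ≤ c⁻¹ ^ 2 := fun _ t =>
    pow_le_pow_left₀ (truncInvS0_nonneg hc t) (truncInvS0_le hc t) 2
  exact (sum_sq_ite_sub_ite_le (fun a _ b _ => D.inBin_unique l i₀)
    (fun a _ b _ => D'.inBin_unique l i₀) (truncInvS0_nonneg hc _)
    (truncInvS0_nonneg hc _)).trans (add_le_add (hsq D _) (hsq D' _))

end SurvData

theorem breslow_tree_sensitivity_general (CZ c : ℝ) (hc : 0 < c)
    {n d : ℕ} (βhat : EuclideanSpace ℝ (Fin d)) (l : ℕ)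
    (D D' : SurvData n d) (hT : D.valid)
    (hZ : D.covBound CZ) (hZ' : D'.covBound CZ)
    (hnb : SurvData.Neighbor D D') :
    ∑ m ∈ Finset.Icc 1 (2 ^ l),
        (D.treeLevel βhat c l m - D'.treeLevel βhat c l m) ^ 2 ≤
      2 * Real.exp (2 * CZ * ‖βhat‖) / (c ^ 4 * n ^ 2) + 4 / (c ^ 2 * n ^ 2) := by
  obtain ⟨i₀, hi₀⟩ := hnb
  set A : ℕ → ℝ := fun m => ∑ i ∈ univ.erase i₀, if D.inBin l m i
    then D.truncInvS0 βhat c (D.T i) - D'.truncInvS0 βhat c (D.T i) else 0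
  set B : ℕ → ℝ := fun m => (if D.inBin l m i₀ then D.truncInvS0 βhat c (D.T i₀) else 0) -
    (if D'.inBin l m i₀ then D'.truncInvS0 βhat c (D'.T i₀) else 0)
  have hA : ∑ m ∈ Icc 1 (2 ^ l), A m ^ 2 ≤ (Real.exp (CZ * ‖βhat‖) / c ^ 2) ^ 2 :=
    SurvData.sum_sq_sum_inBin_truncInvS0_sub_le hi₀ hc hT hZ hZ' l _
  have hB : ∑ m ∈ Icc 1 (2 ^ l), B m ^ 2 ≤ c⁻¹ ^ 2 + c⁻¹ ^ 2 :=
    SurvData.sum_sq_inBin_truncInvS0_sub_le hc i₀ l _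
  have hM : Real.exp (CZ * ‖βhat‖) ^ 2 = Real.exp (2 * CZ * ‖βhat‖) := by
    rw [← Real.exp_nat_mul]; congr 1; push_cast; ring
  calc ∑ m ∈ Icc 1 (2 ^ l), (D.treeLevel βhat c l m - D'.treeLevel βhat c l m) ^ 2
      = ∑ m ∈ Icc 1 (2 ^ l), ((n : ℝ)⁻¹ * A m + (n : ℝ)⁻¹ * B m) ^ 2 :=
        sum_congr rfl fun m _ => by rw [SurvData.treeLevel_sub_treeLevel hi₀]
    _ ≤ ∑ m ∈ Icc 1 (2 ^ l), 2 * (((n : ℝ)⁻¹ * A m) ^ 2 + ((n : ℝ)⁻¹ * B m) ^ 2) :=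
        sum_le_sum fun m _ => add_sq_le
    _ = 2 * (n : ℝ)⁻¹ ^ 2 * (∑ m ∈ Icc 1 (2 ^ l), A m ^ 2 + ∑ m ∈ Icc 1 (2 ^ l), B m ^ 2) := by
        simp only [mul_pow, ← mul_sum, sum_add_distrib]; ring
    _ ≤ 2 * (n : ℝ)⁻¹ ^ 2 * ((Real.exp (CZ * ‖βhat‖) / c ^ 2) ^ 2 + (c⁻¹ ^ 2 + c⁻¹ ^ 2)) := by
        gcongr
    _ = 2 * Real.exp (2 * CZ * ‖βhat‖) / (c ^ 4 * n ^ 2) + 4 / (c ^ 2 * n ^ 2) := by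
        rw [← hM]; field_simp; ring

/-- Sensitivity of the truncated Breslow tree levels (privacy step in the proof of
Theorem 4.1): for neighbouring datasets `D, D'` with covariate bound `C_Z`,
`Σ_{m=1}^{2^l} (x_m(D) − x_m(D'))² ≤ 2 e^{2 C_Z ‖β̂‖}/(c⁴ n²) + 4/(c² n²)`. -/
theorem breslow_tree_sensitivity (CZ c : ℝ) (hCZ : 0 < CZ) (hc : 0 < c)
    {n d : ℕ} (hn : 2 ≤ n) (βhat : EuclideanSpace ℝ (Fin d)) (l : ℕ)
    (D D' : SurvData n d) (hT : D.valid) (hT' : D'.valid)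
    (hZ : D.covBound CZ) (hZ' : D'.covBound CZ)
    (hnb : SurvData.Neighbor D D') :
    ∑ m ∈ Finset.Icc 1 (2 ^ l),
        (D.treeLevel βhat c l m - D'.treeLevel βhat c l m) ^ 2 ≤
      2 * Real.exp (2 * CZ * ‖βhat‖) / (c ^ 4 * n ^ 2) + 4 / (c ^ 2 * n ^ 2) :=
  breslow_tree_sensitivity_general CZ c hc βhat l D D' hT hZ hZ' hnb
end
end

section
/- (Lemma C.1) Let S ≥ 1 be an integer and, for s ∈ {1,…,S}, let n_s ≥ 1 be integers, ε_s > 0 and δ_s ∈ (0,1). Let p₀ ∈ (0,1] and γ > 0. Let {T_{s,i} : s ∈ [S], i ∈ [n_s]} be i.i.d. real-valued random variables with P(T_{1,1} ≥ 1) = p₀, and let W_1, …, W_S be Gaussian random variables, independent of each other and of the T's, with W_s ~ N(0, 2 log(1.25/δ_s) / (n_s ε_s)²). Define p̂_s := n_s⁻¹ Σ_{i=1}^{n_s} 1{T_{s,i} ≥ 1} + W_s and p̂ := (Σ_{s=1}^S n_s p̂_s) / (Σ_{s=1}^S n_s). Then P(p̂ > (1+γ) p₀) ≤ exp(−(γ²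 p₀² / 2) Σ_{s=1}^S n_s) + exp(−(γ² p₀² / 8) · (Σ_{s=1}^S n_s)² / (Σ_{s=1}^S 2 log(1.25/δ_s)/ε_s²)). -/
open MeasureTheory ProbabilityTheory
open scoped NNReal
open Real

/-!
Multiplying by `N = ∑ n_s`, the event `p̂ > (1 + γ) p₀` says that the centred count
`∑_{s,i} (1{T_{s,i} ≥ 1} - p₀)` plus the noise `∑_s n_s W_s` exceeds `γ p₀ N`, so one of the two
exceeds `γ p₀ N / 2`. By Hoeffding's lemma the count is a sum of `N` independent `1/4`-sub-Gaussian
terms, and `n_s W_s` is a centred Gaussian of variance `2 log(1.25/δ_s)/ε_s²`; the Chernoff bound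
for independent sub-Gaussian sums gives the two exponentials.
-/

namespace ProbabilityTheory

variable {Ω : Type*} [MeasurableSpace Ω] {P : Measure Ω}

lemma hasSubgaussianMGF_of_map_eq_gaussianReal {X : Ω → ℝ} {v : ℝ≥0}
    (hX : P.map X = gaussianReal 0 v) : HasSubgaussianMGF X v P where
  integrable_exp_mul t := by
    have hXm : AEMeasurable X P := aemeasurable_of_map_neZero (by rw [hX]; infer_instance)
    have h := integrable_exp_mul_gaussianReal (μ := 0) (v := v) t
    rwa [← hX, integrable_map_measure (by fun_prop) hXm] at h
  mgf_le t := by rw [mgf_gaussianReal hX, zero_mul, zero_add]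

lemma hasSubgaussianMGF_sum_const_mul_of_map_eq_gaussianReal {ι : Type*} [Fintype ι]
    {W : ι → Ω → ℝ} (hW : iIndepFun W P) {v : ι → ℝ≥0}
    (hv : ∀ i, P.map (W i) = gaussianReal 0 (v i)) (r : ι → ℝ) :
    HasSubgaussianMGF (fun ω ↦ ∑ i, r i * W i ω) (∑ i, ‖r i‖₊ ^ 2 * v i) P := by
  refine HasSubgaussianMGF.sum_of_iIndepFun
    (hW.comp (fun i x ↦ r i * x) fun _ ↦ measurable_const_mul _) fun i _ ↦ ?_
  convert (hasSubgaussianMGF_of_map_eq_gaussianReal (hv i)).const_mul (r i) using 3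
  · rfl
  · ext
    simp only [NNReal.coe_mul, NNReal.coe_pow, coe_nnnorm, norm_eq_abs, sq_abs]
    -- `const_mul` builds its constant with a `Mul` instance that `NNReal.coe_mul` does not match
    rfl

lemma hasSubgaussianMGF_indicator_sub_measureReal [IsProbabilityMeasure P] {A : Set Ω}
    (hA : MeasurableSet A) :
    HasSubgaussianMGF (fun ω ↦ A.indicator 1 ω - P.real A) (1 / 4) P := by
  have h := hasSubgaussianMGF_of_mem_Icc (μ := P) (X := A.indicator 1) (a := 0) (b := 1)
    (measurable_one.indicator hA).aemeasurable
    (ae_of_all _ fun ω ↦ ⟨Set.indicator_nonneg (fun _ _ ↦ zero_le_one) ω,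
      Set.indicator_le_self' (fun _ _ ↦ zero_le_one) ω⟩)
  rw [integral_indicator_one hA] at h
  convert h using 1
  norm_num

lemma hasSubgaussianMGF_sum_indicator_sub [IsProbabilityMeasure P] {ι α : Type*} [Fintype ι]
    [MeasurableSpace α] {Y : ι → Ω → α} (hY : iIndepFun Y P) (hYm : ∀ i, Measurable (Y i))
    {B : Set α} (hB : MeasurableSet B) {p : ℝ} (hp : ∀ i, P.real (Y i ⁻¹' B) = p) :
    HasSubgaussianMGF (fun ω ↦ ∑ i, (B.indicator 1 (Y i ω) - p)) (Fintype.card ι / 4) P := by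
  have h := HasSubgaussianMGF.sum_of_iIndepFun (s := Finset.univ)
    (hY.comp (fun _ x ↦ B.indicator 1 x - p) fun _ ↦ (measurable_one.indicator hB).sub_const _)
    fun i _ ↦ (hp i ▸ hasSubgaussianMGF_indicator_sub_measureReal (hYm i hB))
  simpa [div_eq_mul_inv] using h

lemma HasSubgaussianMGF.measure_add_gt_le [IsFiniteMeasure P] {X Y : Ω → ℝ} {cX cY : ℝ≥0}
    (hX : HasSubgaussianMGF X cX P) (hY : HasSubgaussianMGF Y cY P) {a b : ℝ}
    (ha : 0 ≤ a) (hb : 0 ≤ b) :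
    P {ω | a + b < X ω + Y ω} ≤
      ENNReal.ofReal (exp (-a ^ 2 / (2 * cX)) + exp (-b ^ 2 / (2 * cY))) := by
  have hsplit : {ω | a + b < X ω + Y ω} ⊆ {ω | a ≤ X ω} ∪ {ω | b ≤ Y ω} := by
    intro ω (hω : a + b < X ω + Y ω)
    rcases le_or_gt a (X ω) with hXa | hXa
    · exact Or.inl hXa
    · exact Or.inr (show b ≤ Y ω by linarith)
  calc P {ω | a + b < X ω + Y ω}
      ≤ P {ω | a ≤ X ω} + P {ω | b ≤ Y ω} := (measure_mono hsplit).trans (measure_union_le _ _)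
    _ ≤ ENNReal.ofReal (exp (-a ^ 2 / (2 * cX))) + ENNReal.ofReal (exp (-b ^ 2 / (2 * cY))) := by
        rw [← ofReal_measureReal, ← ofReal_measureReal]
        exact add_le_add (ENNReal.ofReal_le_ofReal (hX.measure_ge_le ha))
          (ENNReal.ofReal_le_ofReal (hY.measure_ge_le hb))
    _ = _ := (ENNReal.ofReal_add (exp_pos _).le (exp_pos _).le).symm

end ProbabilityTheory

lemma sq_mul_toNNReal_div_mul_sq {n e x : ℝ} (hn : n ≠ 0) (hx : 0 ≤ x) :
    n ^ 2 * ((x / (n * e) ^ 2).toNNReal : ℝ) = x / e ^ 2 := by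
  rw [Real.coe_toNNReal _ (by positivity), mul_pow, ← mul_div_assoc,
    mul_div_mul_left _ _ (pow_ne_zero 2 hn)]

lemma sum_mul_inv_mul_sum_add {ι : Type*} [Fintype ι] {n : ι → ℕ} (hn : ∀ i, n i ≠ 0)
    (x : (i : ι) → Fin (n i) → ℝ) (w : ι → ℝ) (p : ℝ) :
    ∑ i, (n i : ℝ) * ((n i : ℝ)⁻¹ * ∑ j, x i j + w i) =
      ∑ q : Σ i, Fin (n i), (x q.1 q.2 - p) + ∑ i, (n i : ℝ) * w i + (∑ i, (n i : ℝ)) * p := by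
  have hn' : ∀ i, (n i : ℝ) ≠ 0 := fun i ↦ Nat.cast_ne_zero.2 (hn i)
  rw [Finset.sum_sub_distrib, Finset.sum_const, Finset.card_univ, Fintype.card_sigma,
    ← Finset.univ_sigma_univ, Finset.sum_sigma]
  simp only [mul_add, mul_inv_cancel_left₀ (hn' _), Finset.sum_add_distrib, Fintype.card_fin,
    nsmul_eq_mul, Nat.cast_sum]
  ring

theorem fdp_at_risk_probability_tail_general
    (S : ℕ) (hS : 1 ≤ S) (ns : Fin S → ℕ) (hns : ∀ s, 1 ≤ ns s)
    (ε δ : Fin S → ℝ) (hδ : ∀ s, δ s ∈ Set.Ioo (0 : ℝ) 1)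
    (p₀ γ : ℝ) (hp₀ : p₀ ∈ Set.Ioc (0 : ℝ) 1) (hγ : 0 < γ)
    (Ω : Type) [MeasurableSpace Ω] (P : Measure Ω) [IsProbabilityMeasure P]
    (T : (s : Fin S) → Fin (ns s) → Ω → ℝ) (W : Fin S → Ω → ℝ)
    (hTmeas : ∀ s i, Measurable (T s i))
    -- all the `T_{s,i}`'s and `W_s`'s are mutually independent
    (hindep : iIndepFun
      (Sum.elim (fun p : Σ s : Fin S, Fin (ns s) => T p.1 p.2) W) P)
    (hp : ∀ s i, P {ω | 1 ≤ T s i ω} = ENNReal.ofReal p₀)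
    (hW : ∀ s, Measure.map (W s) P = gaussianReal 0
      (Real.toNNReal (2 * Real.log (1.25 / δ s) / ((ns s : ℝ) * ε s) ^ 2))) :
    P {ω | (1 + γ) * p₀ <
        (∑ s, (ns s : ℝ) *
          ((ns s : ℝ)⁻¹ * (∑ i, if 1 ≤ T s i ω then (1 : ℝ) else 0) + W s ω)) /
        (∑ s, (ns s : ℝ))} ≤
      ENNReal.ofReal
        (Real.exp (-(γ ^ 2 * p₀ ^ 2 / 2) * ∑ s, (ns s : ℝ)) +
          Real.exp (-(γ ^ 2 * p₀ ^ 2 / 8) * (∑ s, (ns s : ℝ)) ^ 2 /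
            (∑ s, 2 * Real.log (1.25 / δ s) / (ε s) ^ 2))) := by
  set N : ℝ := ∑ s, (ns s : ℝ)
  have hnpos : ∀ s, (0 : ℝ) < ns s := fun s ↦ by exact_mod_cast hns s
  have hN : 0 < N := Finset.sum_pos (fun s _ ↦ hnpos s) ⟨⟨0, hS⟩, Finset.mem_univ _⟩
  have hcount := hasSubgaussianMGF_sum_indicator_sub
    (Y := fun q : Σ s, Fin (ns s) ↦ T q.1 q.2) (hindep.precomp Sum.inl_injective)
    (fun q ↦ hTmeas q.1 q.2) (measurableSet_Ici (a := 1)) (p := p₀)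
    fun q ↦ by simp [measureReal_def, Set.preimage, hp, hp₀.1.le]
  have hnoise := hasSubgaussianMGF_sum_const_mul_of_map_eq_gaussianReal
    (hindep.precomp Sum.inr_injective) hW (fun s ↦ (ns s : ℝ))
  have hevent : {ω | (1 + γ) * p₀ <
        (∑ s, (ns s : ℝ) *
          ((ns s : ℝ)⁻¹ * (∑ i, if 1 ≤ T s i ω then (1 : ℝ) else 0) + W s ω)) / N} ⊆
      {ω | γ / 2 * p₀ * N + γ / 2 * p₀ * N <
        ∑ q : Σ s, Fin (ns s), ((Set.Ici 1).indicator 1 (T q.1 q.2 ω) - p₀) +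
          ∑ s, (ns s : ℝ) * W s ω} := by
    intro ω hω
    simp only [Set.mem_ofPred_eq, Set.indicator_apply, Set.mem_Ici, Pi.one_apply] at hω ⊢
    rw [sum_mul_inv_mul_sum_add (fun s ↦ Nat.one_le_iff_ne_zero.1 (hns s)) _ _ p₀,
      lt_div_iff₀ hN] at hω
    linarith
  have hgap : 0 ≤ γ / 2 * p₀ * N := by have := hp₀.1; positivity
  refine (measure_mono hevent).trans ((hcount.measure_add_gt_le hnoise hgap hgap).trans_eq ?_)
  have hlog : ∀ s, 0 ≤ 2 * log (1.25 / δ s) := fun s ↦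
    mul_nonneg zero_le_two (log_nonneg ((one_le_div (hδ s).1).2 (by linarith [(hδ s).2])))
  have hcard : (Fintype.card (Σ s, Fin (ns s)) : ℝ) = N := by simp [N]
  simp only [NNReal.coe_div, NNReal.coe_natCast, NNReal.coe_ofNat, hcard, NNReal.coe_sum,
    NNReal.coe_mul, NNReal.coe_pow, coe_nnnorm, Real.norm_natCast,
    sq_mul_toNNReal_div_mul_sq (hnpos _).ne' (hlog _)]
  congr 3 <;> field_simp <;> ring

/-- Lemma C.1: tail bound for the federated DP at-risk probability estimator.
With i.i.d. observations `T_{s,i}` satisfying `P(T ≥ 1) = p₀`, independent Gaussian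
noises `W_s ~ N(0, 2 log(1.25/δ_s)/(n_s ε_s)²)`, `p̂_s = n_s⁻¹ Σ_i 1{T_{s,i} ≥ 1} + W_s`
and `p̂ = Σ_s n_s p̂_s / Σ_s n_s`, one has
`P(p̂ > (1+γ)p₀) ≤ exp(−(γ²p₀²/2) Σ_s n_s)
  + exp(−(γ²p₀²/8) (Σ_s n_s)² / (Σ_s 2 log(1.25/δ_s)/ε_s²))`. -/
theorem fdp_at_risk_probability_tail
    (S : ℕ) (hS : 1 ≤ S) (ns : Fin S → ℕ) (hns : ∀ s, 1 ≤ ns s)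
    (ε δ : Fin S → ℝ) (hε : ∀ s, 0 < ε s) (hδ : ∀ s, δ s ∈ Set.Ioo (0 : ℝ) 1)
    (p₀ γ : ℝ) (hp₀ : p₀ ∈ Set.Ioc (0 : ℝ) 1) (hγ : 0 < γ)
    (Ω : Type) [MeasurableSpace Ω] (P : Measure Ω) [IsProbabilityMeasure P]
    (T : (s : Fin S) → Fin (ns s) → Ω → ℝ) (W : Fin S → Ω → ℝ)
    (hTmeas : ∀ s i, Measurable (T s i)) (hWmeas : ∀ s, Measurable (W s))
    -- all the `T_{s,i}`'s and `W_s`'s are mutually independent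
    (hindep : iIndepFun
      (Sum.elim (fun p : Σ s : Fin S, Fin (ns s) => T p.1 p.2) W) P)
    -- the `T_{s,i}`'s are identically distributed
    (hident : ∀ s i s' i', Measure.map (T s i) P = Measure.map (T s' i') P)
    (hp : ∀ s i, P {ω | 1 ≤ T s i ω} = ENNReal.ofReal p₀)
    (hW : ∀ s, Measure.map (W s) P = gaussianReal 0
      (Real.toNNReal (2 * Real.log (1.25 / δ s) / ((ns s : ℝ) * ε s) ^ 2))) :
    P {ω | (1 + γ) * p₀ <
        (∑ s, (ns s : ℝ) *
          ((ns s : ℝ)⁻¹ * (∑ i, if 1 ≤ T s i ω then (1 : ℝ) else 0) + W s ω)) /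
        (∑ s, (ns s : ℝ))} ≤
      ENNReal.ofReal
        (Real.exp (-(γ ^ 2 * p₀ ^ 2 / 2) * ∑ s, (ns s : ℝ)) +
          Real.exp (-(γ ^ 2 * p₀ ^ 2 / 8) * (∑ s, (ns s : ℝ)) ^ 2 /
            (∑ s, 2 * Real.log (1.25 / δ s) / (ε s) ^ 2))) :=
  fdp_at_risk_probability_tail_general S hS ns hns ε δ hδ p₀ γ hp₀ hγ Ω P T W hTmeas hindep hp hW
end

section
/- (Lemma D.10, a corollary of a theorem of Naor) There exists an absolute constant c > 0, independent of the dimension, with the following property. Let (Ω, F, (F_k)_{k ∈ ℕ}, P) be a filtered probability space and let (M_k)_{k ≥ 1} be an (F_k)-martingale taking values in ℝ^d equipped with the Euclidean norm ‖·‖₂. If (a_k)_{k ≥ 1} are positive real numbers such that ‖M_{k+1} − M_k‖₂ ≤ a_k almost surely for every k, then for every k ∈ ℕ and every u > 0, P(‖M_{k+1} − M_1‖₂ > u) ≤ e^{2.5} · exp( − c u² / (a_1² + ⋯ + a_k²) ). -/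
/-!
For `ε > 0` the map `x ↦ √(‖x‖² + ε²)` is smooth, its gradient has norm at most `1` and its
Hessian norm at most `1 / ε`. Along the martingale it therefore grows by at most
`⟪∇, M_{k+1} - M_k⟫ + a_k² / (2ε)`, where the gradient `∇` is `ℱ_k`-measurable. Hoeffding's
convexity bound for `exp` and the martingale property then show that
`E exp (t √(‖M_k - M_0‖² + ε²))` gains at most a factor `exp (t a_k² / (2ε) + t² a_k² / 2)` per
step, whatever the dimension. A Chernoff bound with `ε = √S`, `t = u / S`, `S = ∑ a_j²` gives
the tail estimate.
-/

open MeasureTheory ProbabilityTheory Real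
open scoped RealInnerProductSpace

section SmoothNorm

variable {E : Type*} [NormedAddCommGroup E] {ε : ℝ}

noncomputable def smoothNorm (ε : ℝ) (x : E) : ℝ := √(‖x‖ ^ 2 + ε ^ 2)

lemma smoothNorm_zero (hε : 0 ≤ ε) : smoothNorm ε (0 : E) = ε := by
  simp [smoothNorm, sqrt_sq hε]

lemma sq_smoothNorm (ε : ℝ) (x : E) : smoothNorm ε x ^ 2 = ‖x‖ ^ 2 + ε ^ 2 :=
  sq_sqrt (by positivity)

lemma norm_le_smoothNorm (ε : ℝ) (x : E) : ‖x‖ ≤ smoothNorm ε x :=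
  le_sqrt_of_sq_le (le_add_of_nonneg_right (sq_nonneg ε))

lemma le_smoothNorm (ε : ℝ) (x : E) : ε ≤ smoothNorm ε x :=
  le_sqrt_of_sq_le (le_add_of_nonneg_left (sq_nonneg ‖x‖))

lemma smoothNorm_pos (hε : 0 < ε) (x : E) : 0 < smoothNorm ε x :=
  hε.trans_le (le_smoothNorm ε x)

lemma smoothNorm_le_norm_add_abs (ε : ℝ) (x : E) : smoothNorm ε x ≤ ‖x‖ + |ε| :=
  sqrt_le_iff.2 ⟨by positivity, by nlinarith [sq_abs ε, norm_nonneg x, abs_nonneg ε]⟩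

lemma continuous_smoothNorm (ε : ℝ) : Continuous (smoothNorm ε : E → ℝ) := by
  unfold smoothNorm; fun_prop

lemma continuous_exp_smoothNorm_div_smul [NormedSpace ℝ E] (hε : 0 < ε) (t : ℝ) :
    Continuous fun x : E ↦ (exp (t * smoothNorm ε x) / smoothNorm ε x) • x :=
  ((((continuous_smoothNorm ε).const_mul t).rexp.div (continuous_smoothNorm ε)
    fun x ↦ (smoothNorm_pos hε x).ne').smul continuous_id)

lemma norm_exp_smoothNorm_div_smul_le [NormedSpace ℝ E] (hε : 0 < ε) {t : ℝ} (ht : 0 ≤ t) (x : E) :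
    ‖(exp (t * smoothNorm ε x) / smoothNorm ε x) • x‖ ≤ exp (t * (‖x‖ + |ε|)) := by
  have hr := smoothNorm_pos hε x
  calc ‖(exp (t * smoothNorm ε x) / smoothNorm ε x) • x‖
      = exp (t * smoothNorm ε x) * (‖x‖ / smoothNorm ε x) := by
        rw [norm_smul, norm_div, norm_of_nonneg (exp_pos _).le, norm_of_nonneg hr.le]; ring
    _ ≤ exp (t * smoothNorm ε x) * 1 := by
        gcongr; exact div_le_one_of_le₀ (norm_le_smoothNorm ε x) hr.le
    _ ≤ exp (t * (‖x‖ + |ε|)) := by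
        rw [mul_one, exp_le_exp]; gcongr; exact smoothNorm_le_norm_add_abs ε x

variable [InnerProductSpace ℝ E]

lemma smoothNorm_add_le (hε : 0 < ε) (x y : E) :
    smoothNorm ε (x + y) ≤ smoothNorm ε x + ⟪x, y⟫ / smoothNorm ε x + ‖y‖ ^ 2 / (2 * ε) := by
  set r := smoothNorm ε x
  set s := smoothNorm ε (x + y)
  have hr : 0 < r := smoothNorm_pos hε x
  have hsq : s ^ 2 = r ^ 2 + 2 * ⟪x, y⟫ + ‖y‖ ^ 2 := by
    rw [sq_smoothNorm, sq_smoothNorm, norm_add_sq_real]; ring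
  have htaylor : s ≤ r + ⟪x, y⟫ / r + ‖y‖ ^ 2 / (2 * r) := by
    -- AM-GM: `2 r s ≤ r² + s²`
    have hamgm : s ≤ (r ^ 2 + s ^ 2) / (2 * r) := by
      rw [le_div_iff₀ (by positivity)]; nlinarith [sq_nonneg (s - r)]
    calc s ≤ (r ^ 2 + s ^ 2) / (2 * r) := hamgm
      _ = _ := by rw [hsq]; field_simp; ring
  have hcurv : ‖y‖ ^ 2 / (2 * r) ≤ ‖y‖ ^ 2 / (2 * ε) :=
    div_le_div_of_nonneg_left (by positivity) (by positivity) (by linarith [le_smoothNorm ε x])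
  linarith

lemma exp_smoothNorm_add_le (hε : 0 < ε) {t a : ℝ} (ht : 0 ≤ t) (ha : 0 < a) (x : E) {y : E}
    (hy : ‖y‖ ≤ a) :
    exp (t * smoothNorm ε (x + y)) ≤ exp (t * a ^ 2 / (2 * ε)) *
      (cosh (t * a) * exp (t * smoothNorm ε x) +
        sinh (t * a) / a * ⟪(exp (t * smoothNorm ε x) / smoothNorm ε x) • x, y⟫) := by
  set r := smoothNorm ε x
  have hr : 0 < r := smoothNorm_pos hε x
  set s := ⟪x, y⟫ / (r * a)
  have hs : |s| ≤ 1 := by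
    rw [abs_div, abs_of_pos (mul_pos hr ha), div_le_one (mul_pos hr ha)]
    exact (abs_real_inner_le_norm x y).trans
      (mul_le_mul (norm_le_smoothNorm ε x) hy (norm_nonneg y) hr.le)
  have hmono : t * smoothNorm ε (x + y) ≤ t * a ^ 2 / (2 * ε) + t * r + s * (t * a) := by
    have hy2 : ‖y‖ ^ 2 / (2 * ε) ≤ a ^ 2 / (2 * ε) := by gcongr
    have : s * (t * a) = t * (⟪x, y⟫ / r) := by simp only [s]; field_simp
    rw [this]
    have h : smoothNorm ε (x + y) ≤ r + ⟪x, y⟫ / r + a ^ 2 / (2 * ε) :=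
      (smoothNorm_add_le hε x y).trans (by linarith)
    calc t * smoothNorm ε (x + y) ≤ t * (r + ⟪x, y⟫ / r + a ^ 2 / (2 * ε)) := by gcongr
      _ = _ := by ring
  calc exp (t * smoothNorm ε (x + y))
      ≤ exp (t * a ^ 2 / (2 * ε)) * exp (t * r) * exp (s * (t * a)) := by
        rw [← exp_add, ← exp_add]; exact exp_le_exp.2 hmono
    _ ≤ exp (t * a ^ 2 / (2 * ε)) * exp (t * r) * (cosh (t * a) + s * sinh (t * a)) := by
        gcongr; exact exp_mul_le_cosh_add_mul_sinh hs _
    _ = _ := by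
        rw [inner_smul_left]; simp only [s, conj_trivial]; field_simp

end SmoothNorm

namespace MeasureTheory

variable {Ω E : Type*} {m0 : MeasurableSpace Ω} {μ : Measure Ω} [NormedAddCommGroup E] {ε : ℝ}

lemma integrable_exp_mul_smoothNorm [IsFiniteMeasure μ] {X : Ω → E}
    (hX : AEStronglyMeasurable X μ) {C : ℝ} (hXC : ∀ᵐ ω ∂μ, ‖X ω‖ ≤ C) (ε : ℝ) {t : ℝ}
    (ht : 0 ≤ t) : Integrable (fun ω ↦ exp (t * smoothNorm ε (X ω))) μ := by
  refine .of_bound (((continuous_smoothNorm ε).const_mul t).rexp.comp_aestronglyMeasurable hX)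
    (exp (t * (C + |ε|))) ?_
  filter_upwards [hXC] with ω hω
  rw [norm_of_nonneg (exp_pos _).le, exp_le_exp]
  gcongr
  exact (smoothNorm_le_norm_add_abs ε _).trans (by linarith)

lemma ae_norm_sub_le_sum {M : ℕ → Ω → E} {a : ℕ → ℝ}
    (hinc : ∀ k, ∀ᵐ ω ∂μ, ‖M (k + 1) ω - M k ω‖ ≤ a k) (n : ℕ) :
    ∀ᵐ ω ∂μ, ‖M n ω - M 0 ω‖ ≤ ∑ j ∈ Finset.range n, a j := by
  filter_upwards [ae_all_iff.2 hinc] with ω hω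
  rw [← dist_eq_norm, dist_comm]
  exact dist_le_range_sum_of_dist_le (f := (M · ω)) n fun _ ↦ by
    rw [dist_comm, dist_eq_norm]; exact hω _

variable [InnerProductSpace ℝ E]

lemma Martingale.integral_inner_sub_eq_zero [CompleteSpace E] {ι : Type*} [Preorder ι]
    {ℱ : Filtration ι m0} [IsFiniteMeasure μ] {M : ι → Ω → E} (hM : Martingale M ℱ μ) {i j : ι}
    (hij : i ≤ j) {G : Ω → E} (hG : StronglyMeasurable[ℱ i] G) {C : ℝ}
    (hGC : ∀ᵐ ω ∂μ, ‖G ω‖ ≤ C) :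
    ∫ ω, ⟪G ω, M j ω - M i ω⟫ ∂μ = 0 := by
  have hincrement : μ[M j - M i | ℱ i] =ᵐ[μ] 0 := by
    filter_upwards [condExp_sub (hM.integrable j) (hM.integrable i) (ℱ i),
      hM.condExp_ae_eq hij] with ω hsub hj
    rw [hsub, Pi.sub_apply, hj,
      condExp_of_stronglyMeasurable (ℱ.le i) (hM.stronglyAdapted i) (hM.integrable i)]
    simp
  calc ∫ ω, ⟪G ω, M j ω - M i ω⟫ ∂μ
      = ∫ ω, (μ[fun ω ↦ innerSL ℝ (G ω) ((M j - M i) ω) | ℱ i]) ω ∂μ :=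
        (integral_condExp (ℱ.le i)).symm
    _ = ∫ ω, innerSL ℝ (G ω) ((μ[M j - M i | ℱ i]) ω) ∂μ :=
        integral_congr_ae (condExp_stronglyMeasurable_bilin_of_bound _ (ℱ.le i) hG
          ((hM.integrable j).sub (hM.integrable i)) C hGC)
    _ = ∫ _, 0 ∂μ := by
        refine integral_congr_ae ?_
        filter_upwards [hincrement] with ω hω
        simp [hω]
    _ = 0 := integral_zero _ _

lemma Martingale.mgf_smoothNorm_le [CompleteSpace E] {ι : Type*} [Preorder ι]
    {ℱ : Filtration ι m0} [IsFiniteMeasure μ] {M : ι → Ω → E} (hM : Martingale M ℱ μ)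
    (hε : 0 < ε) {t a C : ℝ} (ht : 0 ≤ t) (ha : 0 < a) {i j : ι} (hij : i ≤ j)
    (hinc : ∀ᵐ ω ∂μ, ‖M j ω - M i ω‖ ≤ a) (hC : ∀ᵐ ω ∂μ, ‖M i ω‖ ≤ C) :
    mgf (fun ω ↦ smoothNorm ε (M j ω)) μ t ≤
      exp (t * a ^ 2 / (2 * ε) + (t * a) ^ 2 / 2) * mgf (fun ω ↦ smoothNorm ε (M i ω)) μ t := by
  set R := fun ω ↦ smoothNorm ε (M i ω)
  set G := fun ω ↦ (exp (t * R ω) / R ω) • M i ω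
  have hMi : AEStronglyMeasurable (M i) μ :=
    ((hM.stronglyAdapted i).mono (ℱ.le i)).aestronglyMeasurable
  have hG : StronglyMeasurable[ℱ i] G :=
    (continuous_exp_smoothNorm_div_smul hε t).comp_stronglyMeasurable (hM.stronglyAdapted i)
  have hGC : ∀ᵐ ω ∂μ, ‖G ω‖ ≤ exp (t * (C + |ε|)) := by
    filter_upwards [hC] with ω hω
    exact (norm_exp_smoothNorm_div_smul_le hε ht (M i ω)).trans (by gcongr)
  have hexp_int := integrable_exp_mul_smoothNorm hMi hC ε ht
  have hinner_int : Integrable (fun ω ↦ ⟪G ω, M j ω - M i ω⟫) μ :=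
    (innerSL ℝ).integrable_of_bilin_of_bdd_left _ (hG.mono (ℱ.le i)).aestronglyMeasurable hGC
      ((hM.integrable j).sub (hM.integrable i))
  have hpointwise : ∀ᵐ ω ∂μ, exp (t * smoothNorm ε (M j ω)) ≤ exp (t * a ^ 2 / (2 * ε)) *
      (cosh (t * a) * exp (t * R ω) + sinh (t * a) / a * ⟪G ω, M j ω - M i ω⟫) := by
    filter_upwards [hinc] with ω hω
    simpa using exp_smoothNorm_add_le hε ht ha (M i ω) hω
  calc mgf (fun ω ↦ smoothNorm ε (M j ω)) μ t
      ≤ ∫ ω, exp (t * a ^ 2 / (2 * ε)) *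
          (cosh (t * a) * exp (t * R ω) + sinh (t * a) / a * ⟪G ω, M j ω - M i ω⟫) ∂μ :=
        integral_mono_of_nonneg (ae_of_all _ fun _ ↦ (exp_pos _).le)
          (((hexp_int.const_mul _).add (hinner_int.const_mul _)).const_mul _) hpointwise
    _ = exp (t * a ^ 2 / (2 * ε)) * cosh (t * a) * mgf R μ t := by
        rw [integral_const_mul, integral_add (hexp_int.const_mul _) (hinner_int.const_mul _),
          integral_const_mul, integral_const_mul, hM.integral_inner_sub_eq_zero hij hG hGC]
        simp only [mgf]; ring
    _ ≤ exp (t * a ^ 2 / (2 * ε)) * exp ((t * a) ^ 2 / 2) * mgf R μ t := by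
        gcongr
        · exact mgf_nonneg
        · exact cosh_le_exp_half_sq _
    _ = _ := by rw [exp_add]

variable [CompleteSpace E] {ℱ : Filtration ℕ m0} [IsProbabilityMeasure μ] {M : ℕ → Ω → E}
  {a : ℕ → ℝ} {t : ℝ}

lemma Martingale.mgf_smoothNorm_sub_le (hM : Martingale M ℱ μ) (hε : 0 < ε) (ht : 0 ≤ t)
    (ha : ∀ k, 0 < a k) (hinc : ∀ k, ∀ᵐ ω ∂μ, ‖M (k + 1) ω - M k ω‖ ≤ a k) (k : ℕ) :
    mgf (fun ω ↦ smoothNorm ε (M k ω - M 0 ω)) μ t ≤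
      exp (t * ε + (t / (2 * ε) + t ^ 2 / 2) * ∑ j ∈ Finset.range k, a j ^ 2) := by
  have hN : Martingale (fun k ω ↦ M k ω - M 0 ω) ℱ μ :=
    hM.sub (martingale_const_fun ℱ μ (hM.stronglyAdapted 0) (hM.integrable 0))
  induction k with
  | zero => simp [smoothNorm_zero hε.le]
  | succ k ih =>
    have hstep := hN.mgf_smoothNorm_le hε ht (ha k) k.le_succ
      (by simpa only [sub_sub_sub_cancel_right] using hinc k) (ae_norm_sub_le_sum hinc k)
    calc _ ≤ _ := hstep
      _ ≤ _ := mul_le_mul_of_nonneg_left ih (exp_pos _).le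
      _ = _ := by
        rw [← exp_add, Finset.sum_range_succ]
        congr 1
        field_simp
        ring

lemma Martingale.measureReal_le_norm_sub_le (hM : Martingale M ℱ μ) (hε : 0 < ε) (ht : 0 ≤ t)
    (ha : ∀ k, 0 < a k) (hinc : ∀ k, ∀ᵐ ω ∂μ, ‖M (k + 1) ω - M k ω‖ ≤ a k) (k : ℕ) (u : ℝ) :
    μ.real {ω | u ≤ ‖M k ω - M 0 ω‖} ≤
      exp (-t * u + t * ε + (t / (2 * ε) + t ^ 2 / 2) * ∑ j ∈ Finset.range k, a j ^ 2) := by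
  have hmeas : AEStronglyMeasurable (fun ω ↦ M k ω - M 0 ω) μ :=
    (hM.integrable k).aestronglyMeasurable.sub (hM.integrable 0).aestronglyMeasurable
  calc μ.real {ω | u ≤ ‖M k ω - M 0 ω‖}
      ≤ μ.real {ω | u ≤ smoothNorm ε (M k ω - M 0 ω)} :=
        measureReal_mono fun ω hω ↦ le_trans hω (norm_le_smoothNorm ε _)
    _ ≤ exp (-t * u) * mgf (fun ω ↦ smoothNorm ε (M k ω - M 0 ω)) μ t :=
        measure_ge_le_exp_mul_mgf u ht
          (integrable_exp_mul_smoothNorm hmeas (ae_norm_sub_le_sum hinc k) ε ht)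
    _ ≤ exp (-t * u) *
          exp (t * ε + (t / (2 * ε) + t ^ 2 / 2) * ∑ j ∈ Finset.range k, a j ^ 2) := by
        gcongr; exact hM.mgf_smoothNorm_sub_le hε ht ha hinc k
    _ = _ := by rw [← exp_add]; ring_nf

end MeasureTheory

lemma chernoff_exponent_le {S : ℝ} (hS : 0 < S) (u : ℝ) :
    -(u / S) * u + u / S * √S + (u / S / (2 * √S) + (u / S) ^ 2 / 2) * S ≤
      2.5 + -(1 / 4) * u ^ 2 / S := by
  have hs := sqrt_pos.2 hS
  rw [← sq_sqrt hS.le]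
  field_simp
  norm_num
  nlinarith [sq_nonneg (u - 3 * √S), sq_nonneg (√S)]

/-- Lemma D.10 (a corollary of a theorem of Naor): there is a dimension-free
constant `c > 0` such that every `ℝ^d`-valued martingale `(M_k)` with almost-sure
increment bounds `‖M_{k+1} − M_k‖₂ ≤ a_k` satisfies the Gaussian-type tail bound
`P(‖M_k − M_0‖₂ > u) ≤ e^{2.5} exp(−c u² / (a_0² + ⋯ + a_{k−1}²))`. -/
theorem naor_martingale_tail :
    ∃ c : ℝ, 0 < c ∧
      ∀ (d : ℕ) (Ω : Type) [m0 : MeasurableSpace Ω] (P : Measure Ω)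
        [IsProbabilityMeasure P] (ℱ : Filtration ℕ m0)
        (M : ℕ → Ω → EuclideanSpace ℝ (Fin d)) (a : ℕ → ℝ),
        Martingale M ℱ P →
        (∀ k, 0 < a k) →
        (∀ k, ∀ᵐ ω ∂P, ‖M (k + 1) ω - M k ω‖ ≤ a k) →
        ∀ (k : ℕ) (u : ℝ), 0 < u →
          P {ω | u < ‖M k ω - M 0 ω‖} ≤
            ENNReal.ofReal (Real.exp 2.5 *
              Real.exp (-c * u ^ 2 / ∑ j ∈ Finset.range k, a j ^ 2)) := by
  refine ⟨1 / 4, by norm_num, ?_⟩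
  intro d Ω _ P _ ℱ M a hM ha hinc k u hu
  rcases Nat.eq_zero_or_pos k with rfl | hk
  · simp [not_lt.2 hu.le]
  set S := ∑ j ∈ Finset.range k, a j ^ 2
  have hS : 0 < S :=
    Finset.sum_pos (fun j _ ↦ pow_pos (ha j) 2) (Finset.nonempty_range_iff.2 hk.ne')
  calc P {ω | u < ‖M k ω - M 0 ω‖}
      ≤ P {ω | u ≤ ‖M k ω - M 0 ω‖} := measure_mono (Set.ofPred_subset_ofPred.2 fun _ ↦ le_of_lt)
    _ = ENNReal.ofReal (P.real {ω | u ≤ ‖M k ω - M 0 ω‖}) :=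
        (ofReal_measureReal (measure_ne_top _ _)).symm
    _ ≤ _ := by
        rw [← exp_add]
        refine ENNReal.ofReal_le_ofReal <| (hM.measureReal_le_norm_sub_le (t := u / S)
          (sqrt_pos.2 hS) (by positivity) ha hinc k u).trans ?_
        exact exp_le_exp.2 (chernoff_exponent_le hS u)
end
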